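/- arXiv:0811.3735 — 3 statements merged into one kernel-verified Lean document; each statement's English description precedes it below -/
import Mathlib

section
/- A Lebesgue measurable function u : D → [-∞,∞) is 1-quasi-nearly subharmonic if and only if it is nearly subharmonic, i.e., measurable, u⁺ ∈ L¹_loc(D), and u(x) ≤ (1/(νₙ rⁿ)) ∫_{B(x,r)} u dm for all closed balls B̄(x,r) ⊂ D. -/
open MeasureTheory Metric Set ENNReal

/-- The volume of the unit ball in `ℝⁿ`. -/
noncomputable def unitBallVol (n : ℕ) : ℝ :=
  (volume (ball (0 : EuclideanSpace ℝ (Fin n)) 1)).toReal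

/-- Conversion of an extended real number to `ℝ≥0∞` (the positive part). -/
noncomputable def erealToENNReal (x : EReal) : ℝ≥0∞ :=
  if x = ⊤ then ⊤ else ENNReal.ofReal x.toReal

/-- The (extended-real valued) integral of an `EReal`-valued function on a set, defined as the
difference of the lower integrals of the positive and the negative parts. -/
noncomputable def erealSetIntegral {α : Type*} [MeasurableSpace α] (μ : Measure α)
    (u : α → EReal) (s : Set α) : EReal :=
  ((∫⁻ y in s, erealToENNReal (u y) ∂μ : ℝ≥0∞) : EReal)
    - ((∫⁻ y in s, erealToENNReal (-(u y)) ∂μ : ℝ≥0∞) : EReal)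

/-!
Pointwise `u_M⁺ + min (u⁻, M) = u⁺ + M`. Hence on a ball of volume `V`, after cancelling the
common term `M`, the mean value inequality for `u_M` is the mean value inequality for `u` with
`∫ u⁻` replaced by `∫ min (u⁻, M)`; the case `u(x) < -M` costs nothing because
`∫ min (u⁻, M) ≤ M V`. As `M → ∞` these integrals increase to `∫ u⁻` by monotone convergence,
and the inequality, written as `∫ min (u⁻, M) + (u(x) V)⁺ ≤ ∫ u⁺ + (u(x) V)⁻`, passes to the
supremum.
-/

noncomputable def truncShift (M : ℝ) (a : EReal) : EReal := max a (-(M : EReal)) + (M : EReal)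

lemma truncShift_coe (M t : ℝ) : truncShift M t = ((max t (-M) + M : ℝ) : EReal) := by
  rw [truncShift, EReal.coe_add, EReal.coe_strictMono.monotone.map_max, EReal.coe_neg]

lemma truncShift_bot (M : ℝ) : truncShift M ⊥ = 0 := by
  rw [truncShift, max_eq_right bot_le, ← EReal.coe_neg, ← EReal.coe_add, neg_add_cancel,
    EReal.coe_zero]

lemma monotone_truncShift (M : ℝ) : Monotone (truncShift M) :=
  fun _ _ h => add_le_add_left (max_le_max h le_rfl) _

lemma truncShift_nonneg (M : ℝ) (a : EReal) : 0 ≤ truncShift M a :=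
  truncShift_bot M ▸ monotone_truncShift M bot_le

lemma toENNReal_truncShift_add_min {M : ℝ} (hM : 0 ≤ M) (a : EReal) :
    (truncShift M a).toENNReal + min (-a).toENNReal (ENNReal.ofReal M)
      = a.toENNReal + ENNReal.ofReal M := by
  induction a using EReal.rec with
  | bot => simp [truncShift_bot]
  | top => simp [truncShift]
  | coe t =>
    rw [truncShift_coe, ← EReal.coe_neg, EReal.real_coe_toENNReal, EReal.real_coe_toENNReal,
      EReal.real_coe_toENNReal, ← ENNReal.ofReal_min]
    rcases le_total t 0 with ht | ht
    · rw [ENNReal.ofReal_of_nonpos ht, zero_add,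
        ← ENNReal.ofReal_add (by linarith [le_max_right t (-M)]) (by simp [ht, hM])]
      congr 1
      rcases le_total t (-M) with htM | htM
      · rw [max_eq_right htM, min_eq_right (by linarith)]; ring
      · rw [max_eq_left htM, min_eq_left (by linarith)]; ring
    · rw [min_eq_left (show -t ≤ M by linarith),
        ENNReal.ofReal_of_nonpos (show -t ≤ 0 by linarith), add_zero,
        max_eq_left (show -M ≤ t by linarith), ENNReal.ofReal_add ht hM]

lemma coe_le_div_mul_sub_iff {t V : ℝ} (hV : 0 < V) {P N : ℝ≥0∞} (hP : P ≠ ⊤) :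
    (t : EReal) ≤ ((1 / V : ℝ) : EReal) * ((P : EReal) - N) ↔
      N + ENNReal.ofReal (t * V) ≤ P + ENNReal.ofReal (-(t * V)) := by
  rcases eq_or_ne N ⊤ with rfl | hN
  · have hPfin : P + ENNReal.ofReal (-(t * V)) ≠ ⊤ := by finiteness
    simp [EReal.coe_mul_bot_of_pos (inv_pos.2 hV), hPfin]
  conv_rhs => rw [← ENNReal.ofReal_toReal hP, ← ENNReal.ofReal_toReal hN]
  rw [← EReal.coe_ennreal_toReal hP, ← EReal.coe_ennreal_toReal hN, ← EReal.coe_sub,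
    ← EReal.coe_mul, EReal.coe_le_coe_iff, one_div_mul_eq_div, le_div_iff₀ hV]
  rcases le_total 0 (t * V) with htV | htV
  · rw [ENNReal.ofReal_of_nonpos (neg_nonpos.2 htV), add_zero, ← ENNReal.ofReal_add (by simp) htV,
      ENNReal.ofReal_le_ofReal_iff (by simp)]
    constructor <;> intro h <;> linarith
  · rw [ENNReal.ofReal_of_nonpos htV, add_zero, ← ENNReal.ofReal_add (by simp) (neg_nonneg.2 htV),
      ENNReal.ofReal_le_ofReal_iff (add_nonneg ENNReal.toReal_nonneg (neg_nonneg.2 htV))]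
    constructor <;> intro h <;> linarith

lemma truncShift_le_div_mul_iff {a : EReal} (ha : a ≠ ⊤) {M V : ℝ} (hM : 0 ≤ M) (hV : 0 < V)
    {P I J : ℝ≥0∞} (hP : P ≠ ⊤) (hIJ : I + J = P + ENNReal.ofReal (M * V))
    (hJ : J ≤ ENNReal.ofReal (M * V)) :
    truncShift M a ≤ ((1 / V : ℝ) : EReal) * I ↔
      a ≤ ((1 / V : ℝ) : EReal) * ((P : EReal) - J) := by
  induction a using EReal.rec with
  | bot => simpa [truncShift_bot] using mul_nonneg (by positivity) (EReal.coe_ennreal_nonneg I)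
  | top => exact absurd rfl ha
  | coe t =>
    have hJfin : J ≠ ⊤ := ne_top_of_le_ne_top ENNReal.ofReal_ne_top hJ
    have hIfin : I ≠ ⊤ := by
      have : I + J ≠ ⊤ := hIJ ▸ ENNReal.add_ne_top.2 ⟨hP, ENNReal.ofReal_ne_top⟩
      exact (ENNReal.add_ne_top.1 this).1
    have hIJreal : I.toReal + J.toReal = P.toReal + M * V := by
      have := congrArg ENNReal.toReal hIJ
      rwa [ENNReal.toReal_add hIfin hJfin, ENNReal.toReal_add hP ENNReal.ofReal_ne_top,
        ENNReal.toReal_ofReal (by positivity)] at this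
    have hJreal : J.toReal ≤ M * V := ENNReal.toReal_le_of_le_ofReal (by positivity) hJ
    rw [truncShift_coe, ← EReal.coe_ennreal_toReal hIfin, ← EReal.coe_ennreal_toReal hP,
      ← EReal.coe_ennreal_toReal hJfin, ← EReal.coe_sub, ← EReal.coe_mul, ← EReal.coe_mul,
      EReal.coe_le_coe_iff, EReal.coe_le_coe_iff, one_div_mul_eq_div, one_div_mul_eq_div,
      le_div_iff₀ hV, le_div_iff₀ hV]
    rcases le_total t (-M) with htM | htM
    · have : t * V ≤ -(M * V) := neg_mul M V ▸ mul_le_mul_of_nonneg_right htM hV.le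
      simp only [max_eq_right htM, neg_add_cancel, zero_mul, ENNReal.toReal_nonneg, true_iff]
      linarith [ENNReal.toReal_nonneg (a := P)]
    · rw [max_eq_left htM, add_mul]
      constructor <;> intro h <;> linarith

lemma forall_le_div_mul_sub_iff {a : EReal} (ha : a ≠ ⊤) {V : ℝ} (hV : 0 < V) {P N : ℝ≥0∞}
    (hP : P ≠ ⊤) {J : ℝ → ℝ≥0∞} (hJN : ∀ M, J M ≤ N) (hNJ : N ≤ ⨆ k : ℕ, J k) :
    (∀ M : ℝ, 0 ≤ M → a ≤ ((1 / V : ℝ) : EReal) * ((P : EReal) - J M)) ↔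
      a ≤ ((1 / V : ℝ) : EReal) * ((P : EReal) - N) := by
  induction a using EReal.rec with
  | bot => simp
  | top => exact absurd rfl ha
  | coe t =>
    simp only [coe_le_div_mul_sub_iff hV hP]
    refine ⟨fun h => ?_, fun h M _ => (add_le_add_left (hJN M) _).trans h⟩
    calc N + ENNReal.ofReal (t * V) ≤ (⨆ k : ℕ, J k) + ENNReal.ofReal (t * V) := by gcongr
      _ = ⨆ k : ℕ, (J k + ENNReal.ofReal (t * V)) := ENNReal.iSup_add _
      _ ≤ P + ENNReal.ofReal (-(t * V)) := iSup_le fun k => h k k.cast_nonneg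

section Integrals

variable {α : Type*} [MeasurableSpace α] {μ : Measure α}

lemma erealSetIntegral_eq_sub (u : α → EReal) (s : Set α) :
    erealSetIntegral μ u s =
      ((∫⁻ y in s, (u y).toENNReal ∂μ : ℝ≥0∞) : EReal) - ∫⁻ y in s, (-u y).toENNReal ∂μ :=
  rfl

lemma erealSetIntegral_truncShift (u : α → EReal) (s : Set α) (M : ℝ) :
    erealSetIntegral μ (fun y => truncShift M (u y)) s =
      ∫⁻ y in s, (truncShift M (u y)).toENNReal ∂μ := by
  simp [erealSetIntegral_eq_sub, EReal.toENNReal_of_nonpos, truncShift_nonneg]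

lemma lintegral_toENNReal_truncShift_add {u : α → EReal} (hu : Measurable u) {M : ℝ}
    (hM : 0 ≤ M) :
    ∫⁻ y, (truncShift M (u y)).toENNReal ∂μ + ∫⁻ y, min (-u y).toENNReal (ENNReal.ofReal M) ∂μ
      = ∫⁻ y, (u y).toENNReal ∂μ + ENNReal.ofReal M * μ univ := by
  have hmeas : Measurable fun y => (truncShift M (u y)).toENNReal :=
    ((monotone_truncShift M).measurable.comp hu).ereal_toENNReal
  rw [← lintegral_add_left hmeas,
    lintegral_congr fun y => toENNReal_truncShift_add_min hM (u y),
    lintegral_add_right _ measurable_const, lintegral_const]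

lemma lintegral_eq_iSup_lintegral_min_natCast {f : α → ℝ≥0∞} (hf : Measurable f) :
    ∫⁻ y, f y ∂μ = ⨆ k : ℕ, ∫⁻ y, min (f y) k ∂μ := by
  rw [← lintegral_iSup (fun k => hf.min measurable_const)
    fun k l hkl y => min_le_min_left _ (Nat.mono_cast hkl)]
  congr with y
  rw [← inf_iSup_eq, ENNReal.iSup_natCast, inf_top_eq]

theorem forall_truncShift_le_mean_iff {s : Set α} {u : α → EReal} (hu : Measurable u) {V : ℝ}
    (hV : 0 < V) (hs : μ s = ENNReal.ofReal V) (hP : ∫⁻ y in s, (u y).toENNReal ∂μ ≠ ⊤) {a : EReal}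
    (ha : a ≠ ⊤) :
    (∀ M : ℝ, 0 ≤ M → truncShift M a ≤
      ((1 / V : ℝ) : EReal) * erealSetIntegral μ (fun y => truncShift M (u y)) s) ↔
    a ≤ ((1 / V : ℝ) : EReal) * erealSetIntegral μ u s := by
  set J : ℝ → ℝ≥0∞ := fun M => ∫⁻ y in s, min (-u y).toENNReal (ENNReal.ofReal M) ∂μ
  have hJ : ∀ M, 0 ≤ M → J M ≤ ENNReal.ofReal (M * V) := fun M hM => by
    calc J M ≤ ∫⁻ _ in s, ENNReal.ofReal M ∂μ := lintegral_mono fun y => min_le_right _ _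
      _ = ENNReal.ofReal (M * V) := by rw [setLIntegral_const, hs, ENNReal.ofReal_mul hM]
  have hIJ : ∀ M, 0 ≤ M → ∫⁻ y in s, (truncShift M (u y)).toENNReal ∂μ + J M
      = ∫⁻ y in s, (u y).toENNReal ∂μ + ENNReal.ofReal (M * V) := fun M hM => by
    rw [lintegral_toENNReal_truncShift_add hu hM, Measure.restrict_apply_univ, hs,
      ENNReal.ofReal_mul hM]
  have hN : ∫⁻ y in s, (-u y).toENNReal ∂μ = ⨆ k : ℕ, J k := by
    simp only [J, ENNReal.ofReal_natCast]
    exact lintegral_eq_iSup_lintegral_min_natCast hu.neg.ereal_toENNReal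
  simp only [erealSetIntegral_truncShift]
  rw [forall₂_congr fun M hM => truncShift_le_div_mul_iff ha hM hV hP (hIJ M hM) (hJ M hM),
    erealSetIntegral_eq_sub]
  exact forall_le_div_mul_sub_iff ha hV hP (fun M => lintegral_mono fun y => min_le_left _ _)
    hN.le

end Integrals

lemma unitBallVol_pos (n : ℕ) : 0 < unitBallVol n :=
  ENNReal.toReal_pos (measure_ball_pos volume _ one_pos).ne' measure_ball_lt_top.ne

lemma volume_ball_eq_unitBallVol {n : ℕ} (x : EuclideanSpace ℝ (Fin n)) {r : ℝ} (hr : 0 < r) :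
    volume (ball x r) = ENNReal.ofReal (unitBallVol n * r ^ n) := by
  rw [Measure.addHaar_ball_of_pos volume x hr, finrank_euclideanSpace_fin, mul_comm,
    ENNReal.ofReal_mul (unitBallVol_pos n).le, unitBallVol,
    ENNReal.ofReal_toReal measure_ball_lt_top.ne]

theorem oneQuasiNearlySubharmonic_iff_nearlySubharmonic_general
    {n : ℕ} (D : Set (EuclideanSpace ℝ (Fin n)))
    (u : EuclideanSpace ℝ (Fin n) → EReal)
    (hne : ∀ x, u x ≠ ⊤) (hmeas : Measurable u)
    (hloc : ∀ k : Set (EuclideanSpace ℝ (Fin n)), IsCompact k → k ⊆ D →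
      (∫⁻ x in k, erealToENNReal (u x)) < ⊤) :
    (∀ M : ℝ, 0 ≤ M → ∀ x r, 0 < r → closedBall x r ⊆ D →
      max (u x) (-(M : EReal)) + (M : EReal) ≤
        ((1 / (unitBallVol n * r ^ n) : ℝ) : EReal) *
          erealSetIntegral volume (fun y => max (u y) (-(M : EReal)) + (M : EReal))
            (ball x r)) ↔
    (∀ x r, 0 < r → closedBall x r ⊆ D →
      u x ≤ ((1 / (unitBallVol n * r ^ n) : ℝ) : EReal) *
        erealSetIntegral volume u (ball x r)) := by
  have hball (x : EuclideanSpace ℝ (Fin n)) {r : ℝ} (hr : 0 < r) (hsub : closedBall x r ⊆ D) :=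
    forall_truncShift_le_mean_iff hmeas (mul_pos (unitBallVol_pos n) (pow_pos hr n))
      (volume_ball_eq_unitBallVol x hr)
      ((lintegral_mono_set ball_subset_closedBall).trans_lt
        (hloc _ (isCompact_closedBall x r) hsub)).ne (hne x)
  exact ⟨fun H x r hr hsub => (hball x hr hsub).1 fun M hM => H M hM x r hr hsub,
    fun H M hM x r hr hsub => (hball x hr hsub).2 (H x r hr hsub) M hM⟩

/-- A Lebesgue measurable function `u : D → [-∞, ∞)` on a domain `D ⊆ ℝⁿ`, `n ≥ 2`, with
`u⁺ ∈ L¹_loc(D)`, is `1`-quasi-nearly subharmonic (every truncation `u_M = max(u,-M) + M`,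
`M ≥ 0`, satisfies the mean value inequality `u_M(x) ≤ (1/(νₙ rⁿ)) ∫_{B(x,r)} u_M dm` on all
closed balls `B̄(x,r) ⊆ D`) if and only if it is nearly subharmonic, i.e.
`u(x) ≤ (1/(νₙ rⁿ)) ∫_{B(x,r)} u dm` for all closed balls `B̄(x,r) ⊆ D`. -/
theorem oneQuasiNearlySubharmonic_iff_nearlySubharmonic
    {n : ℕ} (hn : 2 ≤ n) (D : Set (EuclideanSpace ℝ (Fin n)))
    (hDopen : IsOpen D) (hDconn : IsConnected D)
    (u : EuclideanSpace ℝ (Fin n) → EReal)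
    (hne : ∀ x, u x ≠ ⊤) (hmeas : Measurable u)
    (hloc : ∀ k : Set (EuclideanSpace ℝ (Fin n)), IsCompact k → k ⊆ D →
      (∫⁻ x in k, erealToENNReal (u x)) < ⊤) :
    (∀ M : ℝ, 0 ≤ M → ∀ x r, 0 < r → closedBall x r ⊆ D →
      max (u x) (-(M : EReal)) + (M : EReal) ≤
        ((1 / (unitBallVol n * r ^ n) : ℝ) : EReal) *
          erealSetIntegral volume (fun y => max (u y) (-(M : EReal)) + (M : EReal))
            (ball x r)) ↔
    (∀ x r, 0 < r → closedBall x r ⊆ D →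
      u x ≤ ((1 / (unitBallVol n * r ^ n) : ℝ) : EReal) *
        erealSetIntegral volume u (ball x r)) :=
  oneQuasiNearlySubharmonic_iff_nearlySubharmonic_general D u hne hmeas hloc
end

section
/- If u : D → [0,∞) is quasi-nearly subharmonic and p > 0, then u^p is quasi-nearly subharmonic (with a possibly different constant). -/
open MeasureTheory Metric Set Module

/-!
Quasi-nearly subharmonic functions are locally bounded: on balls of a fixed radius `δ` the mean
value inequality bounds `u` by `K / |B(0, δ)|` times the integral of `u` over a compact
neighbourhood.

For `p ≥ 1` the claim is Jensen's inequality `(⨍ u)ᵖ ≤ ⨍ uᵖ`. For `p ≤ 1`, fix `B(x, r)` with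
closure in `D`, put `s = d / p` (`d` the dimension) and let `m` be the supremum of
`(r - |y - x|)ˢ u(y)` over `B(x, r)`, finite by local boundedness. On `B(y, ρ)` with
`ρ = (r - |y - x|) / 2` we have `u ≤ m / ρˢ`, hence `u = u¹⁻ᵖ uᵖ ≤ (m / ρˢ)¹⁻ᵖ uᵖ`, and the mean value
inequality at `y` gives `m ≤ C m¹⁻ᵖ` with `C = 2ˢ K ∫_{B(x,r)} uᵖ / |B(0,1)|`, since `s p = d` makes
all powers of `ρ` cancel. Therefore `(rˢ u(x))ᵖ ≤ mᵖ ≤ C`.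
-/

def QuasiNearlySubharmonicOn {X : Type*} [PseudoMetricSpace X] [MeasurableSpace X]
    (μ : Measure X) (K : ℝ) (u : X → ℝ) (D : Set X) : Prop :=
  ∀ x r, 0 < r → closedBall x r ⊆ D → u x ≤ K * ⨍ y in ball x r, u y ∂μ

theorem rpow_le_of_le_mul_rpow_one_sub {m C p : ℝ} (hm : 0 ≤ m) (hC : 0 ≤ C) (hp : 0 < p)
    (h : m ≤ C * m ^ (1 - p)) : m ^ p ≤ C := by
  rcases hm.eq_or_lt with rfl | hm
  · rwa [Real.zero_rpow hp.ne']
  · have hsplit : m = m ^ p * m ^ (1 - p) := by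
      rw [← Real.rpow_add hm, add_sub_cancel, Real.rpow_one]
    exact le_of_mul_le_mul_right (hsplit ▸ h : m ^ p * m ^ (1 - p) ≤ C * m ^ (1 - p))
      (Real.rpow_pos_of_pos hm _)

theorem setIntegral_le_rpow_mul_setIntegral_rpow {α : Type*} [MeasurableSpace α]
    {μ : Measure α} {s : Set α} {u : α → ℝ} {b p : ℝ} (hsm : MeasurableSet s) (hp : p ≤ 1)
    (hu0 : ∀ x ∈ s, 0 ≤ u x) (hub : ∀ x ∈ s, u x ≤ b) (hu : IntegrableOn u s μ)
    (hup : IntegrableOn (fun x => u x ^ p) s μ) :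
    ∫ x in s, u x ∂μ ≤ b ^ (1 - p) * ∫ x in s, u x ^ p ∂μ := by
  rw [← integral_const_mul]
  refine setIntegral_mono_on hu (hup.const_mul _) hsm fun x hx => ?_
  have := hu0 x hx
  have := hub x hx
  calc u x = u x ^ (1 - p) * u x ^ p := by
        rw [← Real.rpow_add' (hu0 x hx) (by norm_num), sub_add_cancel, Real.rpow_one]
    _ ≤ b ^ (1 - p) * u x ^ p := by gcongr

section AddHaar

variable {E : Type*} [NormedAddCommGroup E] [NormedSpace ℝ E] [FiniteDimensional ℝ E]
  [MeasurableSpace E] [BorelSpace E] {μ : Measure E} [μ.IsAddHaarMeasure]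
  {K p : ℝ} {u : E → ℝ} {D : Set E}

variable (μ) in
theorem setAverage_ball_eq (f : E → ℝ) (x : E) {r : ℝ}
    (hr : 0 < r) : ⨍ y in ball x r, f y ∂μ
      = (r ^ finrank ℝ E * μ.real (ball 0 1))⁻¹ * ∫ y in ball x r, f y ∂μ := by
  rw [setAverage_eq, smul_eq_mul, measureReal_def, Measure.addHaar_ball_of_pos μ x hr,
    ENNReal.toReal_mul, ENNReal.toReal_ofReal (by positivity), measureReal_def]

theorem QuasiNearlySubharmonicOn.bddAbove_image (hu : QuasiNearlySubharmonicOn μ K u D)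
    (hK : 0 ≤ K) (hu0 : ∀ x, 0 ≤ u x) (hD : IsOpen D) (hloc : LocallyIntegrableOn u D μ)
    {s : Set E} (hs : IsCompact s) (hsD : s ⊆ D) : BddAbove (u '' s) := by
  obtain ⟨δ, hδ, hδD⟩ := hs.exists_cthickening_subset_open hD hsD
  have hint : IntegrableOn u (cthickening δ s) μ :=
    hloc.integrableOn_compact_subset hδD hs.cthickening
  refine ⟨K / μ.real (ball 0 δ) * ∫ y in cthickening δ s, u y ∂μ, ?_⟩
  rintro _ ⟨y, hy, rfl⟩
  have hyδ : closedBall y δ ⊆ cthickening δ s := closedBall_subset_cthickening hy δ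
  calc u y ≤ K * ⨍ z in ball y δ, u z ∂μ := hu y δ hδ (hyδ.trans hδD)
    _ = K / μ.real (ball 0 δ) * ∫ z in ball y δ, u z ∂μ := by
        rw [setAverage_eq, smul_eq_mul, Measure.addHaar_real_ball_center, div_eq_mul_inv,
          mul_assoc]
    _ ≤ K / μ.real (ball 0 δ) * ∫ z in cthickening δ s, u z ∂μ := by
        gcongr
        · exact ae_of_all _ hu0
        · exact ball_subset_closedBall.trans hyδ

theorem QuasiNearlySubharmonicOn.integrableOn_rpow (hu : QuasiNearlySubharmonicOn μ K u D)
    (hK : 0 ≤ K) (hu0 : ∀ x, 0 ≤ u x) (hD : IsOpen D) (hloc : LocallyIntegrableOn u D μ)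
    (hp : 0 ≤ p) {s : Set E} (hs : IsCompact s) (hsD : s ⊆ D) :
    IntegrableOn (fun x => u x ^ p) s μ := by
  obtain ⟨M, hM⟩ := hu.bddAbove_image hK hu0 hD hloc hs hsD
  refine .of_bound hs.measure_lt_top ((Real.continuous_rpow_const hp).comp_aestronglyMeasurable
    (hloc.integrableOn_compact_subset hsD hs).aestronglyMeasurable) (M ^ p) ?_
  filter_upwards [ae_restrict_mem hs.measurableSet] with x hx
  rw [Real.norm_of_nonneg (Real.rpow_nonneg (hu0 x) p)]
  exact Real.rpow_le_rpow (hu0 x) (hM (mem_image_of_mem u hx)) hp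

theorem QuasiNearlySubharmonicOn.rpow_of_one_le (hu : QuasiNearlySubharmonicOn μ K u D)
    (hK : 0 ≤ K) (hu0 : ∀ x, 0 ≤ u x) (hD : IsOpen D) (hloc : LocallyIntegrableOn u D μ)
    (hp : 1 ≤ p) : QuasiNearlySubharmonicOn μ (K ^ p) (fun x => u x ^ p) D := by
  intro x r hr hball
  have hint : IntegrableOn u (ball x r) μ :=
    (hloc.integrableOn_compact_subset hball (isCompact_closedBall x r)).mono_set
      ball_subset_closedBall
  have hintp : IntegrableOn (fun y => u y ^ p) (ball x r) μ :=
    (hu.integrableOn_rpow hK hu0 hD hloc (by linarith) (isCompact_closedBall x r)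
      hball).mono_set ball_subset_closedBall
  have : IsFiniteMeasure (μ.restrict (ball x r)) :=
    isFiniteMeasure_restrict.2 measure_ball_lt_top.ne
  have : NeZero (μ.restrict (ball x r)) :=
    ⟨by simpa [Measure.restrict_eq_zero] using (measure_ball_pos μ x hr).ne'⟩
  have havg : 0 ≤ ⨍ y in ball x r, u y ∂μ := integral_nonneg fun y => hu0 y
  have hjensen : (⨍ y in ball x r, u y ∂μ) ^ p ≤ ⨍ y in ball x r, u y ^ p ∂μ :=
    (convexOn_rpow hp).map_average_le (Real.continuous_rpow_const (by linarith)).continuousOn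
      isClosed_Ici (ae_of_all _ hu0) hint hintp
  calc u x ^ p ≤ (K * ⨍ y in ball x r, u y ∂μ) ^ p := by
        gcongr
        exacts [hu0 x, hu x r hr hball]
    _ = K ^ p * (⨍ y in ball x r, u y ∂μ) ^ p := Real.mul_rpow hK havg
    _ ≤ K ^ p * ⨍ y in ball x r, u y ^ p ∂μ := by gcongr

theorem QuasiNearlySubharmonicOn.le_rpow_mul_setIntegral_rpow
    (hu : QuasiNearlySubharmonicOn μ K u D) (hK : 0 ≤ K) (hu0 : ∀ x, 0 ≤ u x) (hp : p ≤ 1)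
    {y : E} {ρ b : ℝ} {S : Set E} (hρ : 0 < ρ) (hyD : closedBall y ρ ⊆ D) (hyS : ball y ρ ⊆ S)
    (hint : IntegrableOn u S μ) (hintp : IntegrableOn (fun z => u z ^ p) S μ)
    (hb : ∀ z ∈ ball y ρ, u z ≤ b) :
    u y ≤ K * ((ρ ^ finrank ℝ E * μ.real (ball 0 1))⁻¹ *
      (b ^ (1 - p) * ∫ z in S, u z ^ p ∂μ)) := by
  have hb0 : 0 ≤ b := (hu0 y).trans (hb y (mem_ball_self hρ))
  refine (hu y ρ hρ hyD).trans ?_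
  rw [setAverage_ball_eq μ u y hρ]
  gcongr
  refine (setIntegral_le_rpow_mul_setIntegral_rpow measurableSet_ball hp (fun z _ => hu0 z) hb
    (hint.mono_set hyS) (hintp.mono_set hyS)).trans ?_
  gcongr
  exact ae_of_all _ fun z => Real.rpow_nonneg (hu0 z) p

theorem QuasiNearlySubharmonicOn.weighted_le_of_weighted_le {x : E} {r s m : ℝ}
    (hu : QuasiNearlySubharmonicOn μ K u D) (hK : 0 ≤ K) (hu0 : ∀ x, 0 ≤ u x)
    (hp0 : 0 < p) (hp1 : p ≤ 1) (hs : s * p = finrank ℝ E) (hball : closedBall x r ⊆ D)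
    (hint : IntegrableOn u (ball x r) μ) (hintp : IntegrableOn (fun y => u y ^ p) (ball x r) μ)
    (hm : ∀ z ∈ ball x r, (r - dist z x) ^ s * u z ≤ m) {y : E} (hy : y ∈ ball x r) :
    (r - dist y x) ^ s * u y ≤
      2 ^ s * K * (∫ z in ball x r, u z ^ p ∂μ) / μ.real (ball 0 1) * m ^ (1 - p) := by
  have hs0 : 0 ≤ s := by
    have : (0 : ℝ) ≤ finrank ℝ E := Nat.cast_nonneg _
    nlinarith
  set ρ := (r - dist y x) / 2
  have hydist : dist y x < r := mem_ball.1 hy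
  have hρ : 0 < ρ := by simp only [ρ]; linarith
  have hρball : closedBall y ρ ⊆ ball x r := closedBall_subset_ball' (by simp only [ρ]; linarith)
  have hρsub : ball y ρ ⊆ ball x r := ball_subset_closedBall.trans hρball
  have hm0 : 0 ≤ m := (mul_nonneg (Real.rpow_nonneg (by linarith) s) (hu0 y)).trans (hm y hy)
  have hbound : ∀ z ∈ ball y ρ, u z ≤ m / ρ ^ s := by
    intro z hz
    have hρz : ρ ≤ r - dist z x := by
      have := dist_triangle z y x
      have := mem_ball.1 hz
      simp only [ρ] at *
      linarith
    rw [le_div_iff₀ (by positivity), mul_comm]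
    calc ρ ^ s * u z ≤ (r - dist z x) ^ s * u z := by gcongr; exact hu0 z
      _ ≤ m := hm z (hρsub hz)
  -- `s = d + s (1 - p)`, so the powers of `ρ` cancel
  have hρs : ρ ^ s = ρ ^ finrank ℝ E * (ρ ^ s) ^ (1 - p) := by
    rw [← Real.rpow_natCast, ← Real.rpow_mul hρ.le, ← Real.rpow_add hρ]
    congr 1
    linear_combination hs
  calc (r - dist y x) ^ s * u y = (2 * ρ) ^ s * u y := by congr 2; simp only [ρ]; ring
    _ ≤ (2 * ρ) ^ s * (K * ((ρ ^ finrank ℝ E * μ.real (ball 0 1))⁻¹ *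
          ((m / ρ ^ s) ^ (1 - p) * ∫ z in ball x r, u z ^ p ∂μ))) := by
        gcongr
        exact hu.le_rpow_mul_setIntegral_rpow hK hu0 hp1 hρ (hρball.trans
          ball_subset_closedBall |>.trans hball) hρsub hint hintp hbound
    _ = 2 ^ s * K * (∫ z in ball x r, u z ^ p ∂μ) / μ.real (ball 0 1) * m ^ (1 - p) := by
        have hν : 0 < μ.real (ball (0 : E) 1) :=
          ENNReal.toReal_pos (measure_ball_pos μ 0 one_pos).ne' measure_ball_lt_top.ne
        rw [Real.mul_rpow zero_le_two hρ.le, Real.div_rpow hm0 (by positivity)]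
        field_simp
        linear_combination (K * m ^ (1 - p) * ∫ z in ball x r, u z ^ p ∂μ) * hρs

theorem QuasiNearlySubharmonicOn.pow_mul_rpow_le_of_le_one
    (hu : QuasiNearlySubharmonicOn μ K u D) (hK : 0 ≤ K) (hu0 : ∀ x, 0 ≤ u x) (hD : IsOpen D)
    (hloc : LocallyIntegrableOn u D μ) (hp0 : 0 < p) (hp1 : p ≤ 1) {x : E} {r : ℝ} (hr : 0 < r)
    (hball : closedBall x r ⊆ D) :
    r ^ finrank ℝ E * u x ^ p ≤
      2 ^ (finrank ℝ E / p) * K * (∫ y in ball x r, u y ^ p ∂μ) / μ.real (ball 0 1) := by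
  set d := finrank ℝ E
  set s := (d : ℝ) / p
  have hs : s * p = d := div_mul_cancel₀ _ hp0.ne'
  have hA : 0 ≤ ∫ y in ball x r, u y ^ p ∂μ :=
    setIntegral_nonneg measurableSet_ball fun y _ => Real.rpow_nonneg (hu0 y) p
  obtain ⟨M, hM⟩ := hu.bddAbove_image hK hu0 hD hloc (isCompact_closedBall x r) hball
  have hint : IntegrableOn u (ball x r) μ :=
    (hloc.integrableOn_compact_subset hball (isCompact_closedBall x r)).mono_set
      ball_subset_closedBall
  have hintp : IntegrableOn (fun y => u y ^ p) (ball x r) μ :=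
    (hu.integrableOn_rpow hK hu0 hD hloc hp0.le (isCompact_closedBall x r) hball).mono_set
      ball_subset_closedBall
  set w : E → ℝ := fun y => (r - dist y x) ^ s * u y
  have hw_bdd : BddAbove (w '' ball x r) := by
    refine ⟨r ^ s * M, forall_mem_image.2 fun y hy => ?_⟩
    have := hu0 y
    have : 0 < r - dist y x := by linarith [mem_ball.1 hy]
    have : r - dist y x ≤ r := by linarith [dist_nonneg (x := y) (y := x)]
    have : u y ≤ M := hM (mem_image_of_mem u (ball_subset_closedBall hy))
    simp only [w]
    gcongr
  set m := sSup (w '' ball x r)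
  have hwm : ∀ y ∈ ball x r, w y ≤ m := fun y hy => le_csSup hw_bdd (mem_image_of_mem w hy)
  have hwx : w x = r ^ s * u x := by simp only [w, dist_self, sub_zero]
  have hwx0 : 0 ≤ w x := hwx ▸ mul_nonneg (by positivity) (hu0 x)
  have hm : m ^ p ≤ 2 ^ s * K * (∫ y in ball x r, u y ^ p ∂μ) / μ.real (ball 0 1) := by
    refine rpow_le_of_le_mul_rpow_one_sub (hwx0.trans (hwm x (mem_ball_self hr)))
      (div_nonneg (by positivity) measureReal_nonneg) hp0
      (csSup_le ((nonempty_ball.2 hr).image w) (forall_mem_image.2 fun y hy => ?_))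
    exact hu.weighted_le_of_weighted_le hK hu0 hp0 hp1 hs hball hint hintp hwm hy
  calc r ^ d * u x ^ p = w x ^ p := by
        rw [hwx, Real.mul_rpow (by positivity) (hu0 x), ← Real.rpow_mul hr.le, hs,
          Real.rpow_natCast]
    _ ≤ m ^ p := Real.rpow_le_rpow hwx0 (hwm x (mem_ball_self hr)) hp0.le
    _ ≤ _ := hm

theorem QuasiNearlySubharmonicOn.rpow_of_le_one (hu : QuasiNearlySubharmonicOn μ K u D)
    (hK : 0 ≤ K) (hu0 : ∀ x, 0 ≤ u x) (hD : IsOpen D) (hloc : LocallyIntegrableOn u D μ)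
    (hp0 : 0 < p) (hp1 : p ≤ 1) :
    QuasiNearlySubharmonicOn μ (2 ^ (finrank ℝ E / p) * K) (fun x => u x ^ p) D := by
  intro x r hr hball
  have hrd : 0 < r ^ finrank ℝ E := by positivity
  show u x ^ p ≤ 2 ^ (finrank ℝ E / p) * K * ⨍ y in ball x r, u y ^ p ∂μ
  rw [setAverage_ball_eq μ _ x hr]
  calc u x ^ p = r ^ finrank ℝ E * u x ^ p / r ^ finrank ℝ E := by field_simp
    _ ≤ 2 ^ (finrank ℝ E / p) * K * (∫ y in ball x r, u y ^ p ∂μ) / μ.real (ball 0 1)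
        / r ^ finrank ℝ E := by
        gcongr
        exact hu.pow_mul_rpow_le_of_le_one hK hu0 hD hloc hp0 hp1 hr hball
    _ = _ := by ring

theorem QuasiNearlySubharmonicOn.rpow (hu : QuasiNearlySubharmonicOn μ K u D) (hK : 1 ≤ K)
    (hu0 : ∀ x, 0 ≤ u x) (hD : IsOpen D) (hloc : LocallyIntegrableOn u D μ) (hp : 0 < p) :
    ∃ K' : ℝ, 1 ≤ K' ∧ QuasiNearlySubharmonicOn μ K' (fun x => u x ^ p) D := by
  have hK0 : 0 ≤ K := zero_le_one.trans hK
  rcases le_total 1 p with hp1 | hp1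
  · exact ⟨K ^ p, Real.one_le_rpow hK hp.le, hu.rpow_of_one_le hK0 hu0 hD hloc hp1⟩
  · refine ⟨_, ?_, hu.rpow_of_le_one hK0 hu0 hD hloc hp hp1⟩
    exact one_le_mul_of_one_le_of_one_le (Real.one_le_rpow one_le_two (by positivity)) hK

end AddHaar

theorem quasiNearlySubharmonicOn_volume_iff {n : ℕ} {K : ℝ}
    {u : EuclideanSpace ℝ (Fin n) → ℝ} {D : Set (EuclideanSpace ℝ (Fin n))} :
    QuasiNearlySubharmonicOn volume K u D ↔ ∀ x r, 0 < r → closedBall x r ⊆ D →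
      u x ≤ K / (unitBallVol n * r ^ n) * ∫ y in ball x r, u y := by
  refine forall₂_congr fun x r => forall_congr' fun hr => ?_
  rw [setAverage_ball_eq volume u x hr, finrank_euclideanSpace_fin, div_eq_mul_inv, mul_assoc,
    unitBallVol, measureReal_def, mul_comm (r ^ n)]

theorem quasiNearlySubharmonic_rpow_general
    {n : ℕ} (D : Set (EuclideanSpace ℝ (Fin n)))
    (hDopen : IsOpen D)
    (u : EuclideanSpace ℝ (Fin n) → ℝ)
    (hnonneg : ∀ x, 0 ≤ u x)
    (hloc : LocallyIntegrableOn u D volume)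
    (p : ℝ) (hp : 0 < p)
    (hqns : ∃ K : ℝ, 1 ≤ K ∧ ∀ x r, 0 < r → closedBall x r ⊆ D →
      u x ≤ K / (unitBallVol n * r ^ n) * ∫ y in ball x r, u y) :
    ∃ K' : ℝ, 1 ≤ K' ∧ ∀ x r, 0 < r → closedBall x r ⊆ D →
      u x ^ p ≤ K' / (unitBallVol n * r ^ n) * ∫ y in ball x r, u y ^ p := by
  obtain ⟨K, hK, hu⟩ := hqns
  obtain ⟨K', hK', hup⟩ :=
    (quasiNearlySubharmonicOn_volume_iff.2 hu).rpow hK hnonneg hDopen hloc hp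
  exact ⟨K', hK', quasiNearlySubharmonicOn_volume_iff.1 hup⟩

/-- If `u : D → [0, ∞)` is quasi-nearly subharmonic on a domain `D ⊆ ℝⁿ`, `n ≥ 2` (i.e.
`u(x) ≤ (K/(νₙ rⁿ)) ∫_{B(x,r)} u dm` on all closed balls `B̄(x,r) ⊆ D`, for some `K ≥ 1`),
and `p > 0`, then `u^p` is quasi-nearly subharmonic (with a possibly different constant). -/
theorem quasiNearlySubharmonic_rpow
    {n : ℕ} (hn : 2 ≤ n) (D : Set (EuclideanSpace ℝ (Fin n)))
    (hDopen : IsOpen D) (hDconn : IsConnected D)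
    (u : EuclideanSpace ℝ (Fin n) → ℝ)
    (hmeas : Measurable u) (hnonneg : ∀ x, 0 ≤ u x)
    (hloc : LocallyIntegrableOn u D volume)
    (p : ℝ) (hp : 0 < p)
    (hqns : ∃ K : ℝ, 1 ≤ K ∧ ∀ x r, 0 < r → closedBall x r ⊆ D →
      u x ≤ K / (unitBallVol n * r ^ n) * ∫ y in ball x r, u y) :
    ∃ K' : ℝ, 1 ≤ K' ∧ ∀ x r, 0 < r → closedBall x r ⊆ D →
      u x ^ p ≤ K' / (unitBallVol n * r ^ n) * ∫ y in ball x r, u y ^ p :=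
  quasiNearlySubharmonic_rpow_general D hDopen u hnonneg hloc p hp hqns
end

section
/- If u : D → [-∞,∞) is quasi-nearly subharmonic in the narrow sense, then either u ≡ -∞ or u is finite almost everywhere in D and u ∈ L¹_loc(D). -/
open MeasureTheory Metric Set ENNReal

lemma measurable_erealToENNReal : Measurable erealToENNReal := by
  have : MeasurableSet {x : EReal | x = ⊤} := by
    simp only [Set.setOf_eq_eq_singleton]
    exact measurableSet_singleton (⊤ : EReal)
  exact Measurable.ite this measurable_const
    (ENNReal.measurable_ofReal.comp measurable_ereal_toReal)

lemma erealToENNReal_top : erealToENNReal ⊤ = ⊤ := if_pos rfl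

/-- If `u : D → [-∞, ∞)` is `K`-quasi-nearly subharmonic in the narrow sense on a domain
`D ⊆ ℝⁿ`, `n ≥ 2` (measurable, `u⁺ ∈ L¹_loc(D)`, and `u(x) ≤ (K/(νₙ rⁿ)) ∫_{B(x,r)} u dm` for
all closed balls `B̄(x,r) ⊆ D`), then either `u ≡ -∞` on `D`, or `u` is finite almost everywhere
in `D` and `u ∈ L¹_loc(D)`. -/
theorem quasiNearlySubharmonic_narrow_dichotomy
    {n : ℕ} (hn : 2 ≤ n) (D : Set (EuclideanSpace ℝ (Fin n)))
    (hDopen : IsOpen D) (hDconn : IsConnected D)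
    (u : EuclideanSpace ℝ (Fin n) → EReal)
    (hne : ∀ x, u x ≠ ⊤) (hmeas : Measurable u)
    (hloc : ∀ k : Set (EuclideanSpace ℝ (Fin n)), IsCompact k → k ⊆ D →
      (∫⁻ x in k, erealToENNReal (u x)) < ⊤)
    (K : ℝ) (hK : 1 ≤ K)
    (hns : ∀ x r, 0 < r → closedBall x r ⊆ D →
      u x ≤ ((K / (unitBallVol n * r ^ n) : ℝ) : EReal) *
        erealSetIntegral volume u (ball x r)) :
    (∀ x ∈ D, u x = ⊥) ∨
      ((∀ᵐ x ∂volume, x ∈ D → u x ≠ ⊥) ∧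
        ∀ k : Set (EuclideanSpace ℝ (Fin n)), IsCompact k → k ⊆ D →
          (∫⁻ x in k, erealToENNReal (-(u x))) < ⊤) := by
  classical
  have hvol : (0 : ℝ) < unitBallVol n :=
    ENNReal.toReal_pos (measure_ball_pos volume _ one_pos).ne' measure_ball_lt_top.ne
  -- a point where u is not ⊥ has finite negative-part integral on admissible balls
  have key : ∀ z r, 0 < r → closedBall z r ⊆ D → u z ≠ ⊥ →
      (∫⁻ y in ball z r, erealToENNReal (-(u y))) < ⊤ := by
    intro z r hr hcb hz
    by_contra h
    have htop : (∫⁻ y in ball z r, erealToENNReal (-(u y))) = ⊤ :=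
      top_le_iff.mp (not_lt.mp h)
    have hI : erealSetIntegral volume u (ball z r) = ⊥ := by
      rw [erealSetIntegral, htop, EReal.coe_ennreal_top, EReal.sub_top]
    have hc : (0 : ℝ) < K / (unitBallVol n * r ^ n) :=
      div_pos (lt_of_lt_of_le one_pos hK) (mul_pos hvol (pow_pos hr n))
    have hle := hns z r hr hcb
    rw [hI, EReal.coe_mul_bot_of_pos hc] at hle
    exact hz (le_bot_iff.mp hle)
  set S : Set (EuclideanSpace ℝ (Fin n)) :=
    {x | ∃ r, 0 < r ∧ closedBall x r ⊆ D ∧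
      (∫⁻ y in ball x r, erealToENNReal (-(u y))) < ⊤} with hSdef
  have hSsubD : S ⊆ D := by
    rintro x ⟨r, hr, hcb, -⟩
    exact hcb (mem_closedBall_self hr.le)
  have memS : ∀ z ∈ D, u z ≠ ⊥ → z ∈ S := by
    intro z hz hzb
    obtain ⟨ε, hε, hball⟩ := Metric.isOpen_iff.mp hDopen z hz
    have hcb : closedBall z (ε / 2) ⊆ D :=
      (closedBall_subset_ball (by linarith)).trans hball
    exact ⟨ε / 2, by positivity, hcb, key z (ε / 2) (by positivity) hcb hzb⟩
  have hSopen : IsOpen S := by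
    rw [Metric.isOpen_iff]
    rintro x ⟨r, hr, hcb, hfin⟩
    refine ⟨r / 2, by positivity, ?_⟩
    intro y hy
    rw [mem_ball] at hy
    refine ⟨r / 2, by positivity, ?_, ?_⟩
    · exact (closedBall_subset_closedBall' (by linarith)).trans hcb
    · exact (lintegral_mono_set (ball_subset_ball' (by linarith))).trans_lt hfin
  have hDSopen : IsOpen (D \ S) := by
    rw [Metric.isOpen_iff]
    rintro x ⟨hxD, hxS⟩
    obtain ⟨ε, hε, hball⟩ := Metric.isOpen_iff.mp hDopen x hxD
    refine ⟨ε / 4, by positivity, ?_⟩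
    intro y hy
    rw [mem_ball] at hy
    refine ⟨hball (mem_ball.mpr (by linarith)), fun hyS => hxS ?_⟩
    obtain ⟨ρ, hρ, hcbρ, hfinρ⟩ := hyS
    set ρ' := min ρ (ε / 4 - dist y x) with hρ'def
    have hρ' : 0 < ρ' := lt_min hρ (by linarith)
    -- there is a point z close to x where u z ≠ ⊥
    have hzex : ∃ z ∈ ball y ρ', u z ≠ ⊥ := by
      by_contra hallz
      push_neg at hallz
      have hmono : (∫⁻ w in ball y ρ', (⊤ : ℝ≥0∞)) ≤
          ∫⁻ w in ball y ρ', erealToENNReal (-(u w)) := by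
        refine setLIntegral_mono' measurableSet_ball fun w hw => ?_
        rw [hallz w hw]
        simp [erealToENNReal_top]
      rw [setLIntegral_const, ENNReal.top_mul (measure_ball_pos volume y hρ').ne'] at hmono
      have : (∫⁻ w in ball y ρ, erealToENNReal (-(u w))) = ⊤ :=
        top_le_iff.mp (hmono.trans (lintegral_mono_set (ball_subset_ball (min_le_left _ _))))
      exact hfinρ.ne this
    obtain ⟨z, hzball, hzbot⟩ := hzex
    rw [mem_ball] at hzball
    have hzx : dist z x < ε / 4 := by
      have h1 : dist z x ≤ dist z y + dist y x := dist_triangle z y x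
      have h2 : ρ' ≤ ε / 4 - dist y x := min_le_right _ _
      linarith
    have hcbz : closedBall z (ε / 4) ⊆ D := by
      refine (closedBall_subset_ball' ?_).trans hball
      linarith
    have hkeyz := key z (ε / 4) (by positivity) hcbz hzbot
    have hxz : dist x z < ε / 4 := by rw [dist_comm]; exact hzx
    refine ⟨ε / 4 - dist x z, by linarith, ?_, ?_⟩
    · refine (closedBall_subset_ball ?_).trans hball
      have h0 : (0 : ℝ) ≤ dist x z := dist_nonneg
      linarith
    · refine (lintegral_mono_set ?_).trans_lt hkeyz
      intro w hw
      rw [mem_ball] at hw ⊢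
      have h1 : dist w z ≤ dist w x + dist x z := dist_triangle w x z
      linarith
  -- dichotomy via connectedness
  by_cases hall : ∀ x ∈ D, u x = ⊥
  · exact Or.inl hall
  push_neg at hall
  obtain ⟨x₀, hx₀D, hx₀⟩ := hall
  have hDS : D ⊆ S := by
    by_contra hnot
    rw [not_subset] at hnot
    obtain ⟨x₁, hx₁D, hx₁S⟩ := hnot
    obtain ⟨w, hwD, hwS, -, hwnS⟩ := hDconn.isPreconnected S (D \ S) hSopen hDSopen
      (fun x hx => (em (x ∈ S)).imp id fun h => ⟨hx, h⟩)
      ⟨x₀, hx₀D, memS x₀ hx₀D hx₀⟩ ⟨x₁, hx₁D, hx₁D, hx₁S⟩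
    exact hwnS hwS
  have hmf : Measurable fun y => erealToENNReal (-(u y)) :=
    measurable_erealToENNReal.comp hmeas.neg
  refine Or.inr ⟨?_, ?_⟩
  · -- a.e. finiteness
    have hN : volume {x | x ∈ D ∧ u x = ⊥} = 0 := by
      apply measure_null_of_locally_null
      intro x hx
      obtain ⟨r, hr, hcb, hfin⟩ := hDS hx.1
      refine ⟨ball x r ∩ {y | u y = ⊥}, ?_, ?_⟩
      · exact Filter.inter_mem (mem_nhdsWithin_of_mem_nhds (ball_mem_nhds x hr))
          (Filter.mem_of_superset self_mem_nhdsWithin fun y hy => hy.2)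
      · have hae : ∀ᵐ y ∂(volume.restrict (ball x r)), erealToENNReal (-(u y)) < ⊤ :=
          ae_lt_top hmf hfin.ne
        rw [ae_iff] at hae
        rw [Measure.restrict_apply' measurableSet_ball] at hae
        refine measure_mono_null ?_ hae
        rintro y ⟨hy1, hy2⟩
        refine ⟨?_, hy1⟩
        simp only [Set.mem_setOf_eq] at hy2 ⊢
        rw [hy2]
        simp [erealToENNReal_top]
    rw [MeasureTheory.ae_iff]
    refine measure_mono_null ?_ hN
    intro x hx
    simp only [Set.mem_setOf_eq] at hx ⊢
    push_neg at hx
    exact hx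
  · -- local integrability of the negative part
    intro k hk hkD
    have hchoice : ∀ x ∈ k, ∃ r, 0 < r ∧ closedBall x r ⊆ D ∧
        (∫⁻ y in ball x r, erealToENNReal (-(u y))) < ⊤ := fun x hx => hDS (hkD hx)
    choose! R hR1 hR2 hR3 using hchoice
    obtain ⟨t, htk, htcover⟩ := hk.elim_nhds_subcover (fun x => ball x (R x))
      (fun x hx => ball_mem_nhds x (hR1 x hx))
    calc (∫⁻ x in k, erealToENNReal (-(u x)))
        ≤ ∫⁻ x in ⋃ y ∈ t, ball y (R y), erealToENNReal (-(u x)) :=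
          lintegral_mono_set htcover
      _ ≤ ∑' i : t, ∫⁻ x in ball (i : EuclideanSpace ℝ (Fin n)) (R i),
            erealToENNReal (-(u x)) := by
          have : (⋃ y ∈ t, ball y (R y)) = ⋃ i : t, ball (i : EuclideanSpace ℝ (Fin n)) (R i) := by
            ext w
            simp
          rw [this]
          exact lintegral_iUnion_le _ _
      _ < ⊤ := by
          rw [tsum_fintype]
          exact ENNReal.sum_lt_top.mpr fun i _ => hR3 i (htk i i.2)
end
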